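/- Every centrally symmetric subdivision S of a regular 2n-gon P admits a longest diagonal l of P that crosses no diagonal of S (where l may itself belong to S). -/

import Mathlib

/-- `x` lies strictly inside the counterclockwise open arc from `a` to `b`
on the cycle `ℤ/mℤ`. -/
def Betw {m : ℕ} (a b x : ZMod m) : Prop :=
  x ≠ a ∧ (x - a).val < (b - a).val

/-- Two chords of a convex `m`-gon (with vertices `ℤ/mℤ`) cross, i.e. are distinct and
share interior points. -/
def Crosses {m : ℕ} (p q : Sym2 (ZMod m)) : Prop :=
  ∃ a b c d : ZMod m, p = s(a, b) ∧ q = s(c, d) ∧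
    a ≠ c ∧ a ≠ d ∧ b ≠ c ∧ b ≠ d ∧ (Betw a b c ↔ ¬ Betw a b d)

/-- A diagonal of the `m`-gon: an unordered pair of distinct, non-adjacent vertices. -/
def IsDiagonal {m : ℕ} (p : Sym2 (ZMod m)) : Prop :=
  ∃ a b : ZMod m, p = s(a, b) ∧ a ≠ b ∧ a - b ≠ 1 ∧ b - a ≠ 1

/-! Choose a chord `{x, y}` of `S` whose shorter arc, from `x` to `y`, is as long as possible,
say of length `k ≤ n`. If `k = n`, this chord is itself a longest diagonal. Otherwise take
`{x, x + n}`: a chord `{c, d}` of `S` crossing it has `x` or `x + n` strictly inside its shorter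
arc, of length at most `k < n`, and therefore crosses `{x, y}` or its central image
`{x + n, y + n}`. -/

section Crossings

variable {m : ℕ} {a b c d x y : ZMod m}

lemma val_sub_pos (h : b ≠ a) : 0 < (b - a).val :=
  ZMod.val_pos.mpr (sub_ne_zero.mpr h)

variable [NeZero m]

lemma val_sub_rev (h : a ≠ b) : (a - b).val = m - (b - a).val := by
  rw [← neg_sub b a, ZMod.neg_val, if_neg (sub_ne_zero.mpr h.symm)]

-- Measuring positions from a base point `a` turns comparisons of arcs into linear arithmetic.
lemma val_sub_eq_ite (a b c : ZMod m) :
    (c - b).val = if (b - a).val ≤ (c - a).val then (c - a).val - (b - a).val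
      else m - ((b - a).val - (c - a).val) := by
  rw [← sub_sub_sub_cancel_right c b a]
  split_ifs with h
  · exact ZMod.val_sub h
  · rw [val_sub_rev fun e => h (by rw [e]), ZMod.val_sub (not_le.mp h).le]

lemma val_sub_ne_val_sub (h : b ≠ c) (a : ZMod m) : (b - a).val ≠ (c - a).val :=
  fun e => h (sub_left_injective (ZMod.val_injective m e))

lemma betw_swap_iff (hab : a ≠ b) (hxa : x ≠ a) (hxb : x ≠ b) :
    Betw b a x ↔ ¬ Betw a b x := by
  have := val_sub_pos hab.symm
  have := val_sub_pos hxa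
  have := val_sub_ne_val_sub hxb a
  have := ZMod.val_lt (x - a)
  have := ZMod.val_lt (b - a)
  simp only [Betw, val_sub_eq_ite a b x, val_sub_eq_ite a b a, sub_self, ZMod.val_zero, hxa, hxb,
    ne_eq, not_false_eq_true, true_and]
  split_ifs <;> omega

lemma crosses_mk_iff : Crosses s(a, b) s(c, d) ↔
    a ≠ c ∧ a ≠ d ∧ b ≠ c ∧ b ≠ d ∧ (Betw a b c ↔ ¬ Betw a b d) := by
  refine ⟨fun ⟨a', b', c', d', hp, hq, h⟩ => ?_, fun h => ⟨a, b, c, d, rfl, rfl, h⟩⟩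
  rcases Sym2.eq_iff.mp hp with ⟨rfl, rfl⟩ | ⟨rfl, rfl⟩ <;>
    rcases Sym2.eq_iff.mp hq with ⟨rfl, rfl⟩ | ⟨rfl, rfl⟩
  · exact h
  · tauto
  all_goals
    obtain rfl | hab := eq_or_ne a b
    · simp [Betw] at h
  · obtain ⟨hbc, hbd, hac, had, hsep⟩ := h
    rw [betw_swap_iff hab hac.symm hbc.symm, betw_swap_iff hab had.symm hbd.symm] at hsep
    tauto
  · obtain ⟨hbd, hbc, had, hac, hsep⟩ := h
    rw [betw_swap_iff hab hac.symm hbc.symm, betw_swap_iff hab had.symm hbd.symm] at hsep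
    tauto

lemma betw_iff_not_betw_comm (hac : a ≠ c) (had : a ≠ d) (hbc : b ≠ c) (hbd : b ≠ d)
    (h : Betw a b c ↔ ¬ Betw a b d) : Betw c d a ↔ ¬ Betw c d b := by
  have := val_sub_pos hac.symm
  have := val_sub_pos had.symm
  have := val_sub_ne_val_sub hbc a
  have := val_sub_ne_val_sub hbd a
  have := ZMod.val_lt (b - a)
  have := ZMod.val_lt (c - a)
  have := ZMod.val_lt (d - a)
  simp only [Betw, val_sub_eq_ite a c a, val_sub_eq_ite a c b, val_sub_eq_ite a c d, sub_self,
    ZMod.val_zero, hac, hbc, hac.symm, had.symm, ne_eq, not_false_eq_true, true_and] at h ⊢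
  split_ifs <;> omega

lemma Crosses.symm {p q : Sym2 (ZMod m)} (h : Crosses p q) : Crosses q p := by
  obtain ⟨a, b, c, d, rfl, rfl, hac, had, hbc, hbd, hsep⟩ := h
  exact ⟨c, d, a, b, rfl, rfl, hac.symm, hbc.symm, had.symm, hbd.symm,
    betw_iff_not_betw_comm hac had hbc hbd hsep⟩

lemma Crosses.betw_or_betw (h : Crosses s(a, b) s(c, d)) : Betw c d a ∨ Betw c d b := by
  have := (crosses_mk_iff.mp h.symm).2.2.2.2
  tauto

lemma crosses_of_betw (hx : Betw c d x) (hy : (d - c).val < (y - c).val) :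
    Crosses s(c, d) s(x, y) := by
  refine crosses_mk_iff.mpr ⟨hx.1.symm, ?_, ?_, ?_, iff_of_true hx fun h => ?_⟩
  · rintro rfl
    simp at hy
  · rintro rfl
    exact lt_irrefl _ hx.2
  · rintro rfl
    exact lt_irrefl _ hy
  · exact lt_asymm h.2 hy

lemma crosses_of_betw_of_val_sub_le (hx : Betw c d x) (hle : (d - c).val ≤ (y - x).val)
    (hm : (d - c).val + (y - x).val ≤ m) : Crosses s(c, d) s(x, y) := by
  have hpos := val_sub_pos hx.1
  refine crosses_of_betw hx ?_
  rw [← sub_add_sub_cancel y x c, ZMod.val_add_of_lt (by have := hx.2; omega)]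
  omega

end Crossings

section ChordLength

variable {m : ℕ}

def chordLength : Sym2 (ZMod m) → ℕ :=
  Sym2.lift ⟨fun a b => min (b - a).val (a - b).val, fun _ _ => min_comm _ _⟩

variable [NeZero m] {a b : ZMod m}

lemma chordLength_mk_of_two_mul_le (h : 2 * (b - a).val ≤ m) :
    chordLength s(a, b) = (b - a).val := by
  obtain rfl | hab := eq_or_ne a b
  · simp [chordLength]
  · simp only [chordLength, Sym2.lift_mk, val_sub_rev hab]
    omega

lemma exists_eq_mk_two_mul_val_sub_le (p : Sym2 (ZMod m)) :
    ∃ a b : ZMod m, p = s(a, b) ∧ 2 * (b - a).val ≤ m := by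
  induction p using Sym2.ind with
  | _ a b =>
    by_cases h : 2 * (b - a).val ≤ m
    · exact ⟨a, b, rfl, h⟩
    · obtain rfl | hab := eq_or_ne a b
      · simp at h
      · exact ⟨b, a, Sym2.eq_swap, by rw [val_sub_rev hab]; omega⟩

end ChordLength

theorem centrally_symmetric_subdivision_admits_uncrossed_diameter_general
    (n : ℕ) (hn : 3 ≤ n) (S : Set (Sym2 (ZMod (2 * n))))
    (hnc : ∀ d ∈ S, ∀ d' ∈ S, ¬ Crosses d d')
    (hcs : ∀ d ∈ S, Sym2.map (fun x => x + (n : ZMod (2 * n))) d ∈ S) :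
    ∃ i : ZMod (2 * n), ∀ d ∈ S, ¬ Crosses s(i, i + (n : ZMod (2 * n))) d := by
  have : NeZero n := ⟨by omega⟩
  have hn_val : (n : ZMod (2 * n)).val = n := ZMod.val_cast_of_lt (by omega)
  rcases S.eq_empty_or_nonempty with rfl | hS
  · exact ⟨0, by simp⟩
  obtain ⟨p, hp, hmax⟩ := S.exists_max_image chordLength S.toFinite hS
  obtain ⟨x, y, rfl, hxy⟩ := exists_eq_mk_two_mul_val_sub_le p
  obtain hk | hk : (y - x).val = n ∨ (y - x).val < n := by omega
  · have hy : y = x + n := eq_add_of_sub_eq' (ZMod.val_injective _ (hk.trans hn_val.symm))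
    exact ⟨x, hy ▸ hnc _ hp⟩
  have hp' : s(x + n, y + n) ∈ S := by simpa using hcs _ hp
  refine ⟨x, fun e he hcross => ?_⟩
  obtain ⟨c, d, rfl, hcd⟩ := exists_eq_mk_two_mul_val_sub_le e
  have hle : (d - c).val ≤ (y - x).val := by
    simpa only [chordLength_mk_of_two_mul_le hcd, chordLength_mk_of_two_mul_le hxy] using hmax _ he
  rcases hcross.betw_or_betw with hx | hx
  · exact hnc _ he _ hp (crosses_of_betw_of_val_sub_le hx hle (by omega))
  · refine hnc _ he _ hp' (crosses_of_betw_of_val_sub_le hx ?_ ?_) <;>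
      rw [add_sub_add_right_eq_sub] <;> omega

/-- Every centrally symmetric subdivision `S` of a regular `2n`-gon (`n ≥ 3`,
vertices `ℤ/2nℤ`, central symmetry `x ↦ x + n`; `S` a set of pairwise noncrossing diagonals
closed under central symmetry) admits a longest diagonal `{i, i+n}` crossing no diagonal of
`S` (the longest diagonal may itself belong to `S`). -/
theorem centrally_symmetric_subdivision_admits_uncrossed_diameter
    (n : ℕ) (hn : 3 ≤ n) (S : Set (Sym2 (ZMod (2 * n))))
    (hdiag : ∀ d ∈ S, IsDiagonal d)
    (hnc : ∀ d ∈ S, ∀ d' ∈ S, ¬ Crosses d d')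
    (hcs : ∀ d ∈ S, Sym2.map (fun x => x + (n : ZMod (2 * n))) d ∈ S) :
    ∃ i : ZMod (2 * n), ∀ d ∈ S, ¬ Crosses s(i, i + (n : ZMod (2 * n))) d :=
  centrally_symmetric_subdivision_admits_uncrossed_diameter_general n hn S hnc hcs
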